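/- For the cycle graph C_n with n ≥ 4, the graceful chromatic number equals 4 if n ≠ 5, and equals 5 if n = 5. -/

import Mathlib

/-- A graceful `k`-coloring of `G`: a proper vertex coloring with colors in
`{1, ..., k}` whose induced edge coloring `f*(uv) = |f u - f v|` is a proper
edge coloring. -/
def IsGracefulColoring {V : Type*} (G : SimpleGraph V) (k : ℕ) (f : V → ℕ) : Prop :=
  (∀ v, 1 ≤ f v ∧ f v ≤ k) ∧
  (∀ ⦃u v⦄, G.Adj u v → f u ≠ f v) ∧
  (∀ ⦃u v w⦄, G.Adj u v → G.Adj u w → v ≠ w →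
    ((f u : ℤ) - f v).natAbs ≠ ((f u : ℤ) - f w).natAbs)

/-- The graceful chromatic number: the least `k` admitting a graceful `k`-coloring. -/
noncomputable def gracefulChromaticNumber {V : Type*} (G : SimpleGraph V) : ℕ :=
  sInf {k | ∃ f : V → ℕ, IsGracefulColoring G k f}

set_option maxHeartbeats 12000000

/-- Auxiliary periodic coloring: blocks of `1,3,2,4` (length `M`, `4 ∣ M`)
followed by blocks of `1,2,4`. -/
def gcAux (M j : ℕ) : ℕ :=
  if j < M then (if j % 4 = 0 then 1 else if j % 4 = 1 then 3 else if j % 4 = 2 then 2 else 4)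
  else (if (j - M) % 3 = 0 then 1 else if (j - M) % 3 = 1 then 2 else 4)

lemma gcAux_bounds (M j : ℕ) : 1 ≤ gcAux M j ∧ gcAux M j ≤ 4 := by
  unfold gcAux; split_ifs <;> omega

lemma mod_two_mul {x n : ℕ} (h : x < 2 * n) (hn : 0 < n) :
    x % n = if x < n then x else x - n := by
  split_ifs with h'
  · exact Nat.mod_eq_of_lt h'
  · rw [Nat.mod_eq_sub_mod (by omega), Nat.mod_eq_of_lt (by omega)]

lemma gcAux_window (M n j p q : ℕ) (hn : 4 ≤ n) (hM4 : M % 4 = 0) (hMn : M ≤ n)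
    (h3 : (n - M) % 3 = 0) (hj : j < n)
    (hp : p = if j = 0 then n - 1 else j - 1) (hq : q = if j + 1 = n then 0 else j + 1) :
    gcAux M j ≠ gcAux M p ∧ gcAux M j ≠ gcAux M q ∧
      ((gcAux M j : ℤ) - gcAux M p).natAbs ≠ ((gcAux M j : ℤ) - gcAux M q).natAbs := by
  unfold gcAux
  split_ifs at hp hq ⊢ <;> omega

section Main
open SimpleGraph

variable {m : ℕ}

lemma val_one_aux (hm : 2 ≤ m) : (1 : Fin (m + 2)).val = 1 := by
  rw [Fin.val_one']; exact Nat.mod_eq_of_lt (by omega)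

lemma val_sub_one (hm : 2 ≤ m) (u : Fin (m + 2)) :
    (u - 1).val = if u.val = 0 then (m + 2) - 1 else u.val - 1 := by
  have h2 : (u - 1).val = (m + 2 - 1 + u.val) % (m + 2) := by
    rw [Fin.sub_def, val_one_aux hm]
  rw [h2, mod_two_mul (by have := u.isLt; omega) (by omega)]
  have := u.isLt
  split_ifs <;> omega

lemma val_add_one (hm : 2 ≤ m) (u : Fin (m + 2)) :
    (u + 1).val = if u.val + 1 = m + 2 then 0 else u.val + 1 := by
  rw [Fin.val_add, val_one_aux hm, mod_two_mul (by have := u.isLt; omega) (by omega)]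
  have := u.isLt
  split_ifs <;> omega

lemma sub_one_ne_add_one (hm : 2 ≤ m) (u : Fin (m + 2)) : u - 1 ≠ u + 1 := by
  intro h
  have h' := congrArg Fin.val h
  rw [val_sub_one hm, val_add_one hm] at h'
  have := u.isLt
  split_ifs at h' <;> omega

lemma adj_self_sub_one (u : Fin (m + 2)) : (cycleGraph (m + 2)).Adj u (u - 1) :=
  cycleGraph_adj.mpr (Or.inl (sub_sub_cancel u 1))

lemma adj_self_add_one (u : Fin (m + 2)) : (cycleGraph (m + 2)).Adj u (u + 1) :=
  cycleGraph_adj.mpr (Or.inr (add_sub_cancel_left u 1))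

lemma adj_cases {u v : Fin (m + 2)} (h : (cycleGraph (m + 2)).Adj u v) :
    v = u - 1 ∨ v = u + 1 := by
  rw [cycleGraph_adj] at h
  rcases h with h | h
  · left; rw [← h, sub_sub_cancel]
  · right; rw [← h, add_sub_cancel]

lemma small_window {k a b c d e : ℕ} (hk : k ≤ 3)
    (ha : 1 ≤ a ∧ a ≤ k) (hb : 1 ≤ b ∧ b ≤ k) (hc : 1 ≤ c ∧ c ≤ k)
    (hd : 1 ≤ d ∧ d ≤ k) (he' : 1 ≤ e ∧ e ≤ k)
    (pcb : c ≠ b) (pcd : c ≠ d) (pba : b ≠ a) (pde : d ≠ e)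
    (wb : ((b : ℤ) - a).natAbs ≠ ((b : ℤ) - c).natAbs)
    (wc : ((c : ℤ) - b).natAbs ≠ ((c : ℤ) - d).natAbs)
    (wd : ((d : ℤ) - c).natAbs ≠ ((d : ℤ) - e).natAbs) : False := by
  omega

/-- Lower bound: no graceful coloring of a cycle with at most 3 colors. -/
lemma no_small_coloring (hm : 2 ≤ m) (k : ℕ) (hk : k ≤ 3) (f : Fin (m + 2) → ℕ)
    (hf : IsGracefulColoring (cycleGraph (m + 2)) k f) : False := by
  obtain ⟨hb, hp, he⟩ := hf
  set u : Fin (m + 2) := 0 with hu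
  have e1 : u - 1 + 1 = u := by exact sub_add_cancel u 1
  have e2 : u + 1 - 1 = u := by exact add_sub_cancel_right u 1
  have w0 := he (adj_self_sub_one u) (adj_self_add_one u) (sub_one_ne_add_one hm u)
  have wl := he (adj_self_sub_one (u - 1)) (adj_self_add_one (u - 1))
    (sub_one_ne_add_one hm (u - 1))
  have wr := he (adj_self_sub_one (u + 1)) (adj_self_add_one (u + 1))
    (sub_one_ne_add_one hm (u + 1))
  rw [e1] at wl
  rw [e2] at wr
  exact small_window hk (hb (u - 1 - 1)) (hb (u - 1)) (hb u) (hb (u + 1)) (hb (u + 1 + 1))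
    (hp (adj_self_sub_one u)) (hp (adj_self_add_one u))
    (hp (adj_self_sub_one (u - 1))) (hp (adj_self_add_one (u + 1))) wl w0 wr

end Main

/-- Explicit graceful 5-coloring of `C₅`. -/
lemma c5_coloring : IsGracefulColoring (SimpleGraph.cycleGraph 5) 5 ![1, 2, 4, 3, 5] := by
  unfold IsGracefulColoring
  refine ⟨by decide, by decide, by decide⟩

def ndist (x y : ℕ) : ℕ := (x - y) + (y - x)

lemma no4aux : ∀ a b c d e : Fin 4,
    ¬ (a ≠ b ∧ b ≠ c ∧ c ≠ d ∧ d ≠ e ∧ e ≠ a ∧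
       ndist a.val b.val ≠ ndist a.val e.val ∧
       ndist b.val c.val ≠ ndist b.val a.val ∧
       ndist c.val d.val ≠ ndist c.val b.val ∧
       ndist d.val e.val ≠ ndist d.val c.val ∧
       ndist e.val a.val ≠ ndist e.val d.val) := by decide

lemma bridge_ne {x y : ℕ} (hx : 1 ≤ x) (hy : 1 ≤ y) (h : x ≠ y) : x - 1 ≠ y - 1 := by omega

lemma bridge_nd {x y z : ℕ} (hx : 1 ≤ x) (hy : 1 ≤ y) (hz : 1 ≤ z)
    (h : ((x : ℤ) - y).natAbs ≠ ((x : ℤ) - z).natAbs) :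
    ndist (x - 1) (y - 1) ≠ ndist (x - 1) (z - 1) := by unfold ndist; omega

/-- `C₅` has no graceful 4-coloring. -/
lemma c5_no_four (f : Fin 5 → ℕ) (hf : IsGracefulColoring (SimpleGraph.cycleGraph 5) 4 f) :
    False := by
  obtain ⟨hb, hp, he⟩ := hf
  have b0 := hb 0; have b1 := hb 1; have b2 := hb 2; have b3 := hb 3; have b4 := hb 4
  have a01 : (SimpleGraph.cycleGraph 5).Adj 0 1 := by decide
  have a04 : (SimpleGraph.cycleGraph 5).Adj 0 4 := by decide
  have a12 : (SimpleGraph.cycleGraph 5).Adj 1 2 := by decide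
  have a10 : (SimpleGraph.cycleGraph 5).Adj 1 0 := by decide
  have a23 : (SimpleGraph.cycleGraph 5).Adj 2 3 := by decide
  have a21 : (SimpleGraph.cycleGraph 5).Adj 2 1 := by decide
  have a34 : (SimpleGraph.cycleGraph 5).Adj 3 4 := by decide
  have a32 : (SimpleGraph.cycleGraph 5).Adj 3 2 := by decide
  have a40 : (SimpleGraph.cycleGraph 5).Adj 4 0 := by decide
  have a43 : (SimpleGraph.cycleGraph 5).Adj 4 3 := by decide
  have p0 := hp a01; have p1 := hp a12; have p2 := hp a23; have p3 := hp a34; have p4 := hp a40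
  have w0 := he a01 a04 (by decide)
  have w1 := he a12 a10 (by decide)
  have w2 := he a23 a21 (by decide)
  have w3 := he a34 a32 (by decide)
  have w4 := he a40 a43 (by decide)
  refine no4aux ⟨f 0 - 1, by omega⟩ ⟨f 1 - 1, by omega⟩ ⟨f 2 - 1, by omega⟩
    ⟨f 3 - 1, by omega⟩ ⟨f 4 - 1, by omega⟩
    ⟨Fin.ne_of_val_ne (bridge_ne b0.1 b1.1 p0), Fin.ne_of_val_ne (bridge_ne b1.1 b2.1 p1),
     Fin.ne_of_val_ne (bridge_ne b2.1 b3.1 p2), Fin.ne_of_val_ne (bridge_ne b3.1 b4.1 p3),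
     Fin.ne_of_val_ne (bridge_ne b4.1 b0.1 p4),
     bridge_nd b0.1 b1.1 b4.1 w0, bridge_nd b1.1 b2.1 b0.1 w1, bridge_nd b2.1 b3.1 b1.1 w2,
     bridge_nd b3.1 b4.1 b2.1 w3, bridge_nd b4.1 b0.1 b3.1 w4⟩

theorem gracefulChromaticNumber_cycleGraph (n : ℕ) (hn : 4 ≤ n) :
    gracefulChromaticNumber (SimpleGraph.cycleGraph n) =
      if n = 5 then 5 else 4 := by
  obtain ⟨m, rfl⟩ : ∃ m, n = m + 2 := ⟨n - 2, by omega⟩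
  have hm : 2 ≤ m := by omega
  by_cases h5 : m + 2 = 5
  · rw [if_pos h5]
    obtain rfl : m = 3 := by omega
    unfold gracefulChromaticNumber
    apply le_antisymm
    · exact Nat.sInf_le ⟨![1, 2, 4, 3, 5], c5_coloring⟩
    · refine le_csInf ⟨5, ![1, 2, 4, 3, 5], c5_coloring⟩ ?_
      rintro k ⟨f, hf⟩
      by_contra hlt
      push_neg at hlt
      rcases Nat.lt_or_ge k 4 with h | h
      · exact no_small_coloring (by omega) k (by omega) f hf
      · obtain rfl : k = 4 := by omega
        exact c5_no_four f hf
  · rw [if_neg h5]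
    obtain ⟨M, hM4, hMn, h3⟩ :
        ∃ M, M % 4 = 0 ∧ M ≤ m + 2 ∧ (m + 2 - M) % 3 = 0 :=
      ⟨(m + 2) - 3 * ((3 * ((m + 2) % 4)) % 4), by omega, by omega, by omega⟩
    have hcol : IsGracefulColoring (SimpleGraph.cycleGraph (m + 2)) 4
        (fun i => gcAux M i.val) := by
      have key : ∀ u : Fin (m + 2),
          gcAux M u.val ≠ gcAux M (u - 1).val ∧ gcAux M u.val ≠ gcAux M (u + 1).val ∧
          ((gcAux M u.val : ℤ) - gcAux M (u - 1).val).natAbs ≠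
            ((gcAux M u.val : ℤ) - gcAux M (u + 1).val).natAbs := fun u =>
        gcAux_window M (m + 2) u.val (u - 1).val (u + 1).val (by omega) hM4 hMn h3
          u.isLt (val_sub_one hm u) (val_add_one hm u)
      refine ⟨fun v => gcAux_bounds M v.val, fun u v h => ?_, fun u v w h1 h2 h3' => ?_⟩
      · rcases adj_cases h with rfl | rfl
        · exact (key u).1
        · exact (key u).2.1
      · rcases adj_cases h1 with rfl | rfl <;> rcases adj_cases h2 with h4 | h4
        · exact absurd h4.symm h3'
        · rw [h4]; exact (key u).2.2
        · rw [h4]; exact ((key u).2.2).symm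
        · exact absurd h4.symm h3'
    unfold gracefulChromaticNumber
    apply le_antisymm
    · exact Nat.sInf_le ⟨_, hcol⟩
    · refine le_csInf ⟨4, _, hcol⟩ ?_
      rintro k ⟨f, hf⟩
      by_contra hlt
      push_neg at hlt
      exact no_small_coloring hm k (by omega) f hf
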